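/- arXiv:math/0509661 — 2 statements merged into one kernel-verified Lean document; each statement's English description precedes it below -/
import Mathlib

section
/- The group Tr_3, generated by elements R_{ij} for distinct i,j in {1,2,3} with relations R_{ij} = R_{ji}^{-1}, R_{12}R_{13}R_{23} = R_{23}R_{13}R_{12} and all permuted instances of the Yang–Baxter relation, is isomorphic to the free product Z^2 * Z. -/
/-- Index type for generators `R_{ij}`, `i ≠ j`. -/
def PairNe (n : ℕ) := {p : Fin n × Fin n // p.1 ≠ p.2}

/-- The generator `R_{ij}` in the free group. -/
def fgen {n : ℕ} (i j : Fin n) (h : i ≠ j) : FreeGroup (PairNe n) :=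
  FreeGroup.of ⟨(i, j), h⟩

/-- Relations of `QTr_n`: the quantum Yang–Baxter relations
`R_{ij}R_{ik}R_{jk} = R_{jk}R_{ik}R_{ij}` for distinct `i,j,k`, and commutation
`R_{ij}R_{kl} = R_{kl}R_{ij}` for distinct `i,j,k,l`. -/
def qtrRels (n : ℕ) : Set (FreeGroup (PairNe n)) :=
  {w | (∃ (i j k : Fin n) (hij : i ≠ j) (hik : i ≠ k) (hjk : j ≠ k),
          w = fgen i j hij * fgen i k hik * fgen j k hjk *
              (fgen j k hjk * fgen i k hik * fgen i j hij)⁻¹) ∨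
       (∃ (i j k l : Fin n) (hij : i ≠ j) (hkl : k ≠ l),
          i ≠ k ∧ i ≠ l ∧ j ≠ k ∧ j ≠ l ∧
          w = fgen i j hij * fgen k l hkl * (fgen k l hkl * fgen i j hij)⁻¹)}

/-- Relations of `Tr_n`: those of `QTr_n` together with `R_{ij} R_{ji} = 1`. -/
def trRels (n : ℕ) : Set (FreeGroup (PairNe n)) :=
  qtrRels n ∪ {w | ∃ (i j : Fin n) (hij : i ≠ j), w = fgen i j hij * fgen j i hij.symm}

/-- The quasitriangular group `QTr_n`. -/
abbrev QTrGroup (n : ℕ) := PresentedGroup (qtrRels n)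

/-- The triangular group `Tr_n`. -/
abbrev TrGroup (n : ℕ) := PresentedGroup (trRels n)

/-- The generator `R_{ij}` of `QTr_n`. -/
def QTrGen {n : ℕ} (i j : Fin n) (h : i ≠ j) : QTrGroup n := PresentedGroup.of ⟨(i, j), h⟩

/-- The generator `R_{ij}` of `Tr_n`. -/
def TrGen {n : ℕ} (i j : Fin n) (h : i ≠ j) : TrGroup n := PresentedGroup.of ⟨(i, j), h⟩

/-!
Write `a = R₀₁`, `b = R₀₂`, `c = R₁₂` (indices in `Fin 3`). Since `R_ji = R_ij⁻¹`, each of the six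
Yang–Baxter relations is equivalent to `a b c = c b a`, and there are no commutation relations
(`Fin 3` has no four distinct elements). In the generators `a`, `X = a b`, `Y = c a⁻¹` the relation
`a b c = c b a` reads `X Y a = Y X a`, i.e. `X Y = Y X`, so `Tr₃ = ⟨a, X, Y | X Y = Y X⟩ ≅ ℤ² ∗ ℤ`.
-/

open Multiplicative
open scoped Monoid.Coprod
open Monoid.Coprod (inl inr)

section Group

variable {G : Type*} [Group G]

/- With `x = R_ij`, `y = R_ik`, `z = R_jk` and `R_ji = R_ij⁻¹`, the conclusions are the Yang–Baxter
relations for the transposed triples `(j, i, k)` and `(i, k, j)`. -/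

theorem yangBaxter_swap₁₂ {x y z : G} (h : x * y * z = z * y * x) :
    x⁻¹ * z * y = y * z * x⁻¹ :=
  calc x⁻¹ * z * y = x⁻¹ * (z * y * x) * x⁻¹ := by group
    _ = x⁻¹ * (x * y * z) * x⁻¹ := by rw [h]
    _ = y * z * x⁻¹ := by group

theorem yangBaxter_swap₂₃ {x y z : G} (h : x * y * z = z * y * x) :
    y * x * z⁻¹ = z⁻¹ * x * y :=
  calc y * x * z⁻¹ = z⁻¹ * (z * y * x) * z⁻¹ := by group
    _ = z⁻¹ * (x * y * z) * z⁻¹ := by rw [h]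
    _ = z⁻¹ * x * y := by group

def Commute.zpowersHom₂ {x y : G} (h : Commute x y) : Multiplicative (ℤ × ℤ) →* G :=
  ((zpowersHom G x).noncommCoprod (zpowersHom G y) fun m n => h.zpow_zpow m.toAdd n.toAdd).comp
    (MulEquiv.prodMultiplicative (G := ℤ) (H := ℤ)).toMonoidHom

@[simp]
theorem Commute.zpowersHom₂_ofAdd {x y : G} (h : Commute x y) (m n : ℤ) :
    h.zpowersHom₂ (ofAdd (m, n)) = x ^ m * y ^ n := rfl

theorem MonoidHom.ext_mint_prod {f g : Multiplicative (ℤ × ℤ) →* G}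
    (h₁ : f (ofAdd (1, 0)) = g (ofAdd (1, 0))) (h₂ : f (ofAdd (0, 1)) = g (ofAdd (0, 1))) :
    f = g := by
  refine MonoidHom.ext fun x => ?_
  have hx : x = ofAdd ((1 : ℤ), (0 : ℤ)) ^ x.toAdd.1 * ofAdd ((0 : ℤ), (1 : ℤ)) ^ x.toAdd.2 := by
    simp [← ofAdd_zsmul, ← ofAdd_add]
  rw [hx, map_mul, map_mul, map_zpow, map_zpow, map_zpow, map_zpow, h₁, h₂]

end Group

section TrGen

variable {n : ℕ}

theorem lift_fgen {G : Type*} [Group G] (f : PairNe n → G) (i j : Fin n) (h : i ≠ j) :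
    FreeGroup.lift f (fgen i j h) = f ⟨(i, j), h⟩ :=
  FreeGroup.lift_apply_of

theorem TrGen_swap (i j : Fin n) (h : i ≠ j) : TrGen j i h.symm = (TrGen i j h)⁻¹ :=
  eq_inv_of_mul_eq_one_right (PresentedGroup.one_of_mem (Or.inr ⟨i, j, h, rfl⟩))

theorem TrGen_yangBaxter (i j k : Fin n) (hij : i ≠ j) (hik : i ≠ k) (hjk : j ≠ k) :
    TrGen i j hij * TrGen i k hik * TrGen j k hjk = TrGen j k hjk * TrGen i k hik * TrGen i j hij :=
  PresentedGroup.mk_eq_mk_of_mul_inv_mem (Or.inl (Or.inl ⟨i, j, k, hij, hik, hjk, rfl⟩))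

end TrGen

namespace Tr3

section Lift

variable {G : Type*} [Group G]

def genImage (a b c : G) (p : PairNe 3) : G :=
  match p.1.1.val, p.1.2.val with
  | 0, 1 => a | 1, 0 => a⁻¹
  | 0, 2 => b | 2, 0 => b⁻¹
  | 1, 2 => c | 2, 1 => c⁻¹
  | _, _ => 1

theorem genImage_trRels {a b c : G} (h : a * b * c = c * b * a) :
    ∀ r ∈ trRels 3, FreeGroup.lift (genImage a b c) r = 1 := by
  rintro r ((⟨i, j, k, hij, hik, hjk, rfl⟩ | ⟨i, j, k, l, hij, hkl, hik, hil, hjk, hjl, rfl⟩) |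
    ⟨i, j, hij, rfl⟩)
  · simp only [map_mul, map_inv, lift_fgen, mul_inv_eq_one]
    fin_cases i <;> fin_cases j <;> fin_cases k <;> try contradiction
    · exact h
    · exact yangBaxter_swap₂₃ h
    · exact yangBaxter_swap₁₂ h
    · exact yangBaxter_swap₂₃ (yangBaxter_swap₁₂ h)
    · exact yangBaxter_swap₁₂ (yangBaxter_swap₂₃ h)
    · exact yangBaxter_swap₁₂ (yangBaxter_swap₂₃ (yangBaxter_swap₁₂ h))
  · omega
  · simp only [map_mul, lift_fgen]
    fin_cases i <;> fin_cases j <;>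
      first | contradiction | exact mul_inv_cancel _ | exact inv_mul_cancel _

def lift {a b c : G} (h : a * b * c = c * b * a) : TrGroup 3 →* G :=
  PresentedGroup.toGroup (genImage_trRels h)

theorem hom_ext {φ ψ : TrGroup 3 →* G}
    (h₀₁ : φ (TrGen 0 1 (by decide)) = ψ (TrGen 0 1 (by decide)))
    (h₀₂ : φ (TrGen 0 2 (by decide)) = ψ (TrGen 0 2 (by decide)))
    (h₁₂ : φ (TrGen 1 2 (by decide)) = ψ (TrGen 1 2 (by decide))) : φ = ψ := by
  refine PresentedGroup.ext fun ⟨(i, j), hij⟩ => ?_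
  change φ (TrGen i j hij) = ψ (TrGen i j hij)
  fin_cases i <;> fin_cases j <;> first
    | contradiction
    | assumption
    | (rw [TrGen_swap _ _ (Ne.symm hij), map_inv, map_inv]; congr 1)

end Lift

abbrev a : TrGroup 3 := TrGen 0 1 (by decide)
abbrev b : TrGroup 3 := TrGen 0 2 (by decide)
abbrev c : TrGroup 3 := TrGen 1 2 (by decide)

theorem a_mul_b_mul_c : a * b * c = c * b * a := TrGen_yangBaxter _ _ _ _ _ _

theorem commute_mul_mul_inv : Commute (a * b) (c * a⁻¹) :=
  calc a * b * (c * a⁻¹) = a * b * c * a⁻¹ := by group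
    _ = c * b * a * a⁻¹ := by rw [a_mul_b_mul_c]
    _ = c * a⁻¹ * (a * b) := by group

def t : Multiplicative (ℤ × ℤ) ∗ Multiplicative ℤ := inr (ofAdd 1)
def u : Multiplicative (ℤ × ℤ) ∗ Multiplicative ℤ := inl (ofAdd (1, 0))
def v : Multiplicative (ℤ × ℤ) ∗ Multiplicative ℤ := inl (ofAdd (0, 1))

theorem commute_u_v : Commute u v := (Commute.all _ _).map inl

def toCoprod : TrGroup 3 →* Multiplicative (ℤ × ℤ) ∗ Multiplicative ℤ :=
  lift (a := t) (b := t⁻¹ * u) (c := v * t) <| by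
    simp only [mul_assoc, mul_inv_cancel_left]
    rw [← mul_assoc, ← mul_assoc, commute_u_v.eq]

def ofCoprod : Multiplicative (ℤ × ℤ) ∗ Multiplicative ℤ →* TrGroup 3 :=
  Monoid.Coprod.lift commute_mul_mul_inv.zpowersHom₂ (zpowersHom _ a)

@[simp] theorem toCoprod_a : toCoprod a = t := rfl
@[simp] theorem toCoprod_b : toCoprod b = t⁻¹ * u := rfl
@[simp] theorem toCoprod_c : toCoprod c = v * t := rfl

@[simp] theorem ofCoprod_t : ofCoprod t = a := by simp [ofCoprod, t]
@[simp] theorem ofCoprod_u : ofCoprod u = a * b := by simp [ofCoprod, u]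
@[simp] theorem ofCoprod_v : ofCoprod v = c * a⁻¹ := by simp [ofCoprod, v]

theorem ofCoprod_comp_toCoprod : ofCoprod.comp toCoprod = MonoidHom.id _ :=
  hom_ext (by simp) (by simp) (by simp)

theorem toCoprod_comp_ofCoprod : toCoprod.comp ofCoprod = MonoidHom.id _ := by
  have hu : toCoprod (ofCoprod u) = u := by simp
  have hv : toCoprod (ofCoprod v) = v := by simp
  have ht : toCoprod (ofCoprod t) = t := by simp
  exact Monoid.Coprod.hom_ext (MonoidHom.ext_mint_prod hu hv) (MonoidHom.ext_mint ht)

def mulEquivCoprod : TrGroup 3 ≃* Multiplicative (ℤ × ℤ) ∗ Multiplicative ℤ :=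
  toCoprod.toMulEquiv ofCoprod ofCoprod_comp_toCoprod toCoprod_comp_ofCoprod

end Tr3

/-- `Tr_3` is isomorphic to the free product `ℤ² ∗ ℤ`. -/
theorem stmt_7 :
    Nonempty (TrGroup 3 ≃* Monoid.Coprod (Multiplicative (ℤ × ℤ)) (Multiplicative ℤ)) :=
  ⟨Tr3.mulEquivCoprod⟩
end

section
/- For the polynomial P_n(t) = sum_k S(n,k) t^{n-k} (with S(n,k) the Stirling numbers of the second kind), the formal power series 1/P_n(-t) has nonnegative integer coefficients for every n. -/
/-!
Write `A_n(x) = ∑ₖ (-1)^(n-k) S(n,k) xᵏ = (-1)ⁿ Tₙ(-x)`, with `Tₙ` the Touchard polynomial. The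
recurrence `S(n+1,k+1) = S(n,k) + (k+1) S(n,k+1)` reads `A_{n+1} = x (A_n - A_n')`. Since
`(e^(-x) A_n(x))' = -e^(-x) (A_n - A_n')(x)`, Rolle's theorem, together with a sign change of
`A_n - A_n'` to the right of the largest root of `A_n`, shows inductively that `A_n` has `n`
distinct nonnegative real roots `r`. Hence `P_n(-t)`, the reversal of `A_n`, is `∏ (1 - r t)`,
whose inverse `∏ ∑ₗ rˡ tˡ` has nonnegative coefficients. They are integers because `P_n(-t)` has
integer coefficients and constant term `1`.
-/

/-- Stirling numbers of the second kind, defined combinatorially. -/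
noncomputable def stirling (n k : ℕ) : ℕ :=
  Nat.card {P : Finpartition (Finset.univ : Finset (Fin n)) // P.parts.card = k}

/-- The formal power series `P_n(-t) = ∑_j (-1)^j S(n, n-j) t^j` (a polynomial with
constant term `S(n,n) = 1`, viewed in `ℚ[[t]]`; for `n ≥ 1` the coefficients vanish for
`j ≥ n`). -/
noncomputable def PnNeg (n : ℕ) : PowerSeries ℚ :=
  PowerSeries.mk fun j => (-1 : ℚ) ^ j * (stirling n (n - j) : ℚ)

open Finset Polynomial

namespace Finpartition

variable {α : Type*} [DecidableEq α] {s b : Finset α} {a : α}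

lemma parts_avoid_of_mem_insert_empty (P : Finpartition s) (hb : b ∈ insert ∅ P.parts) :
    (P.avoid b).parts = P.parts.erase b := by
  have hdisj : ∀ d ∈ P.parts, d ≠ b → Disjoint d b := fun d hd hdb => by
    rcases mem_insert.1 hb with rfl | hb
    exacts [disjoint_empty_right d, P.disjoint hd hb hdb]
  ext u
  simp only [mem_avoid, mem_erase]
  constructor
  · rintro ⟨d, hd, hdb, rfl⟩
    have hdb' : d ≠ b := by rintro rfl; exact hdb le_rfl
    rw [(hdisj d hd hdb').sdiff_eq_left]
    exact ⟨hdb', hd⟩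
  · rintro ⟨hub, hu⟩
    exact ⟨u, hu, fun h => P.ne_bot hu ((hdisj u hu hub).eq_bot_of_le h),
      (hdisj u hu hub).sdiff_eq_left⟩

/-- Adds `a` to the part `b` of `Q`; `b = ∅` encodes adding `{a}` as a new part. -/
def addPoint (ha : a ∉ s) (Q : Finpartition s) (hb : b ∈ insert ∅ Q.parts) :
    Finpartition (insert a s) :=
  (Q.avoid b).extend (b := insert a b) (insert_nonempty a b).ne_empty
    (disjoint_insert_right.2 ⟨fun h => ha (mem_sdiff.1 h).1, sdiff_disjoint⟩)
    (by
      have : b ⊆ s := by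
        rcases mem_insert.1 hb with rfl | hb
        exacts [empty_subset s, Q.le hb]
      rw [sup_eq_union, union_insert, sdiff_union_of_subset this])

lemma parts_addPoint (ha : a ∉ s) (Q : Finpartition s) (hb : b ∈ insert ∅ Q.parts) :
    (Q.addPoint ha hb).parts = insert (insert a b) (Q.parts.erase b) := by
  rw [addPoint, extend_parts, parts_avoid_of_mem_insert_empty Q hb]

lemma card_parts_addPoint (ha : a ∉ s) (Q : Finpartition s) (hb : b ∈ insert ∅ Q.parts) :
    #(Q.addPoint ha hb).parts = #(Q.parts.erase b) + 1 := by
  rw [addPoint, card_extend, parts_avoid_of_mem_insert_empty Q hb]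

lemma part_addPoint (ha : a ∉ s) (Q : Finpartition s) (hb : b ∈ insert ∅ Q.parts) :
    (Q.addPoint ha hb).part a = insert a b :=
  part_eq_of_mem _ (by rw [parts_addPoint]; exact mem_insert_self _ _) (mem_insert_self a b)

def erasePoint (ha : a ∉ s) (P : Finpartition (insert a s)) : Finpartition s :=
  (P.avoid {a}).copy (by rw [sdiff_singleton_eq_erase, erase_insert ha])

lemma mem_parts_erasePoint (ha : a ∉ s) (P : Finpartition (insert a s)) {u : Finset α} :
    u ∈ (P.erasePoint ha).parts ↔ u ≠ ∅ ∧ ∃ d ∈ P.parts, d.erase a = u := by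
  simp only [erasePoint, copy_parts, mem_avoid, subset_singleton_iff, ← erase_eq_empty_iff,
    sdiff_singleton_eq_erase]
  constructor
  · rintro ⟨d, hd, hne, rfl⟩
    exact ⟨hne, d, hd, rfl⟩
  · rintro ⟨hu, d, hd, rfl⟩
    exact ⟨d, hd, hu, rfl⟩

lemma erasePoint_addPoint (ha : a ∉ s) (Q : Finpartition s) (hb : b ∈ insert ∅ Q.parts) :
    (Q.addPoint ha hb).erasePoint ha = Q := by
  have hQ : ∀ d ∈ Q.parts, a ∉ d := fun d hd h => ha (Q.le hd h)
  have hab : a ∉ b := by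
    rcases mem_insert.1 hb with rfl | hb
    exacts [notMem_empty a, hQ b hb]
  ext u
  rw [mem_parts_erasePoint, parts_addPoint]
  constructor
  · rintro ⟨hu, d, hd, rfl⟩
    rcases mem_insert.1 hd with rfl | hd
    · rw [erase_insert hab] at hu ⊢
      exact (mem_insert.1 hb).resolve_left hu
    · rw [erase_eq_of_notMem (hQ d (mem_of_mem_erase hd))]
      exact mem_of_mem_erase hd
  · intro hu
    refine ⟨Q.ne_empty hu, ?_⟩
    by_cases hub : u = b
    · exact ⟨insert a b, mem_insert_self _ _, by rw [erase_insert hab, hub]⟩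
    · exact ⟨u, mem_insert_of_mem (mem_erase.2 ⟨hub, hu⟩), erase_eq_of_notMem (hQ u hu)⟩

lemma erase_part_mem_insert_empty (ha : a ∉ s) (P : Finpartition (insert a s)) :
    (P.part a).erase a ∈ insert ∅ (P.erasePoint ha).parts := by
  by_cases h : (P.part a).erase a = ∅
  · exact h ▸ mem_insert_self _ _
  · exact mem_insert_of_mem ((mem_parts_erasePoint ha P).2
      ⟨h, P.part a, P.part_mem.2 (mem_insert_self a s), rfl⟩)

lemma addPoint_erasePoint (ha : a ∉ s) (P : Finpartition (insert a s))
    (hb : b ∈ insert ∅ (P.erasePoint ha).parts) (h : (P.part a).erase a = b) :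
    (P.erasePoint ha).addPoint ha hb = P := by
  subst h
  have hB : P.part a ∈ P.parts := P.part_mem.2 (mem_insert_self a s)
  ext u
  rw [parts_addPoint, insert_erase (P.mem_part_self.2 (mem_insert_self a s)), mem_insert,
    mem_erase, mem_parts_erasePoint]
  constructor
  · rintro (rfl | ⟨hu, -, d, hd, rfl⟩)
    · exact hB
    · have had : a ∉ d := fun h => hu ((P.part_eq_of_mem hd h) ▸ rfl)
      rwa [erase_eq_of_notMem had]
  · intro hu
    by_cases huB : u = P.part a
    · exact Or.inl huB
    have hau : a ∉ u := fun h => huB (P.part_eq_of_mem hu h).symm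
    refine Or.inr ⟨fun h => ?_, P.ne_empty hu, u, hu, erase_eq_of_notMem hau⟩
    have hdisj := P.disjoint hu hB huB
    exact P.ne_empty hu (hdisj.eq_bot_of_le (h ▸ erase_subset a _))

lemma card_parts_eq_card_parts_erasePoint (ha : a ∉ s) (P : Finpartition (insert a s)) :
    #P.parts = #((P.erasePoint ha).parts.erase ((P.part a).erase a)) + 1 := by
  have := card_parts_addPoint ha _ (erase_part_mem_insert_empty ha P)
  rwa [addPoint_erasePoint ha P _ rfl] at this

def addPointEquiv (ha : a ∉ s) (k : ℕ) :
    {Q : Finpartition s // #Q.parts = k} ⊕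
        (Σ Q : {Q : Finpartition s // #Q.parts = k + 1}, Q.1.parts) ≃
      {P : Finpartition (insert a s) // #P.parts = k + 1} where
  toFun
    | .inl Q => ⟨Q.1.addPoint ha (mem_insert_self ∅ _), by
        rw [card_parts_addPoint, erase_eq_of_notMem Q.1.empty_notMem_parts, Q.2]⟩
    | .inr ⟨Q, t⟩ => ⟨Q.1.addPoint ha (mem_insert_of_mem t.2), by
        rw [card_parts_addPoint, card_erase_of_mem t.2, Q.2, Nat.add_sub_cancel]⟩
  invFun P :=
    have hcard := P.2 ▸ card_parts_eq_card_parts_erasePoint ha P.1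
    if h : (P.1.part a).erase a = ∅ then
      .inl ⟨P.1.erasePoint ha, by
        rwa [h, erase_eq_of_notMem (empty_notMem_parts _), Nat.add_right_cancel_iff, eq_comm]
          at hcard⟩
    else
      have hmem := (mem_insert.1 (erase_part_mem_insert_empty ha P.1)).resolve_left h
      .inr ⟨⟨P.1.erasePoint ha, by
        have := card_pos.2 ⟨_, hmem⟩
        rw [card_erase_of_mem hmem] at hcard
        omega⟩, ⟨_, hmem⟩⟩
  left_inv := by
    rintro (Q | ⟨Q, t⟩)
    · have h : ((Q.1.addPoint ha (mem_insert_self ∅ _)).part a).erase a = ∅ := by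
        rw [part_addPoint, erase_insert (notMem_empty a)]
      dsimp only
      rw [dif_pos h]
      exact congrArg Sum.inl (Subtype.ext (erasePoint_addPoint ha _ _))
    · have hat : a ∉ t.1 := fun h => ha (Q.1.le t.2 h)
      have h : ((Q.1.addPoint ha (mem_insert_of_mem t.2)).part a).erase a = t := by
        rw [part_addPoint, erase_insert hat]
      dsimp only
      rw [dif_neg (h.symm ▸ Q.1.ne_empty t.2)]
      exact congrArg Sum.inr (Sigma.subtype_ext (Subtype.ext (erasePoint_addPoint ha _ _)) h)
  right_inv P := by
    dsimp only
    split_ifs with h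
    · exact Subtype.ext (addPoint_erasePoint ha P.1 (mem_insert_self _ _) h)
    · exact Subtype.ext (addPoint_erasePoint ha P.1 (erase_part_mem_insert_empty ha P.1) rfl)

end Finpartition

section Count

variable {α : Type*} [DecidableEq α]

theorem card_finpartition_insert {s : Finset α} {a : α} (ha : a ∉ s) (k : ℕ) :
    Fintype.card {P : Finpartition (insert a s) // #P.parts = k + 1} =
      Fintype.card {Q : Finpartition s // #Q.parts = k} +
        (k + 1) * Fintype.card {Q : Finpartition s // #Q.parts = k + 1} := by
  rw [← Fintype.card_congr (Finpartition.addPointEquiv ha k), Fintype.card_sum, Fintype.card_sigma]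
  simp only [Fintype.card_coe]
  rw [sum_congr rfl fun Q _ => Q.2, sum_const, card_univ, smul_eq_mul, mul_comm]

theorem card_finpartition_eq_stirlingSecond (s : Finset α) (k : ℕ) :
    Fintype.card {P : Finpartition s // #P.parts = k} = Nat.stirlingSecond #s k := by
  induction s using Finset.induction_on generalizing k with
  | empty =>
    have hP (P : Finpartition (∅ : Finset α)) : P.parts = ∅ := P.parts_eq_empty_iff.2 rfl
    cases k with
    | zero =>
      exact Fintype.card_eq_one_iff.2 ⟨⟨Finpartition.empty _, rfl⟩,
        fun P => Subtype.ext (Finpartition.ext (by rw [hP, hP]))⟩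
    | succ k => exact Fintype.card_eq_zero_iff.2 ⟨fun P => by simpa [hP] using P.2⟩
  | insert a s ha ih =>
    cases k with
    | zero =>
      rw [card_insert_of_notMem ha, Nat.stirlingSecond_succ_zero]
      exact Fintype.card_eq_zero_iff.2 ⟨fun P =>
        (P.1.parts_nonempty (insert_nonempty a s).ne_empty).ne_empty (card_eq_zero.1 P.2)⟩
    | succ k =>
      rw [card_finpartition_insert ha, ih, ih, card_insert_of_notMem ha,
        Nat.stirlingSecond_succ_succ, add_comm]


end Count

theorem stirling_eq_stirlingSecond (n k : ℕ) : stirling n k = Nat.stirlingSecond n k := by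
  rw [stirling, Nat.card_eq_fintype_card, card_finpartition_eq_stirlingSecond,
    card_univ, Fintype.card_fin]

namespace Polynomial

theorem reverse_X_sub_C {R : Type*} [CommRing R] [Nontrivial R] (z : R) :
    reverse (X - C z) = 1 - C z * X := by
  have hX := reverse_X_mul (1 : R[X])
  rw [mul_one, ← C_1, reverse_C] at hX
  rw [sub_eq_add_neg, ← C_neg, reverse_add_C, natDegree_X, pow_one, hX, C_1, C_neg, neg_mul,
    ← sub_eq_add_neg]

theorem reverse_prod_X_sub_C {R : Type*} [CommRing R] [IsDomain R] (S : Finset R) :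
    (∏ z ∈ S, (X - C z)).reverse = ∏ z ∈ S, (1 - C z * X) :=
  Finset.prod_hom_rel (r := fun p q : R[X] => p.reverse = q) (by rw [← C_1, reverse_C])
    fun z p q h => by rw [reverse_mul_of_domain, h, reverse_X_sub_C]

theorem Monic.eq_prod_X_sub_C_of_natDegree_le_card {R : Type*} [CommRing R] [IsDomain R]
    {p : R[X]} (hp : p.Monic) {T : Finset R} (hT : ∀ t ∈ T, p.IsRoot t)
    (hcard : p.natDegree ≤ #T) : p = ∏ t ∈ T, (X - C t) := by
  refine eq_of_monic_of_dvd_of_natDegree_le (monic_prod_of_monic _ _ fun t _ => monic_X_sub_C t)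
    hp ?_ (by rwa [natDegree_finsetProd_X_sub_C_eq_card])
  rw [prod_eq_multiset_prod, Multiset.prod_X_sub_C_dvd_iff_le_roots hp.ne_zero,
    Multiset.le_iff_subset T.nodup]
  exact fun t ht => (mem_roots hp.ne_zero).2 (hT t ht)

/-- Rolle's theorem for `x ↦ exp (-x) * p(x)`. -/
theorem exists_isRoot_sub_derivative_between {p : ℝ[X]} {x y : ℝ} (hxy : x < y)
    (hx : p.IsRoot x) (hy : p.IsRoot y) : ∃ c ∈ Set.Ioo x y, (p - derivative p).IsRoot c := by
  have hg (t : ℝ) : HasDerivAt (fun t => Real.exp (-t) * p.eval t)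
      (-(Real.exp (-t) * (p - derivative p).eval t)) t := by
    refine ((hasDerivAt_neg t).exp.mul (p.hasDerivAt t)).congr_deriv ?_
    rw [eval_sub]
    ring
  obtain ⟨c, hc, hc0⟩ := exists_hasDerivAt_eq_zero hxy
    (fun t _ => (hg t).continuousAt.continuousWithinAt) (by simp [hx.eq_zero, hy.eq_zero])
    fun t _ => hg t
  exact ⟨c, hc, by simpa [Real.exp_ne_zero] using hc0⟩

theorem exists_isRoot_gt_of_eval_neg {q : ℝ[X]} (hdeg : 0 < q.degree) (hlead : 0 ≤ q.leadingCoeff)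
    {x : ℝ} (hx : q.eval x < 0) : ∃ c, x < c ∧ q.IsRoot c := by
  obtain ⟨y, hy, hxy⟩ := ((tendsto_atTop_of_leadingCoeff_nonneg q hdeg hlead).eventually_ge_atTop 0
    |>.and (Filter.eventually_ge_atTop x)).exists
  obtain ⟨c, hc, hc0⟩ := intermediate_value_Icc hxy q.continuous.continuousOn ⟨hx.le, hy⟩
  exact ⟨c, hc.1.lt_of_ne (by rintro rfl; exact hx.ne hc0), hc0⟩

theorem eval_derivative_prod_X_sub_C_max'_pos {S : Finset ℝ} (hS : S.Nonempty) :
    0 < (derivative (∏ z ∈ S, (X - C z))).eval (S.max' hS) := by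
  rw [← mul_prod_erase S _ (S.max'_mem hS), derivative_mul, derivative_X_sub_C, one_mul,
    eval_add, eval_mul, eval_sub, eval_X, eval_C, sub_self, zero_mul, add_zero, eval_prod]
  exact prod_pos fun z hz => by
    simpa using (S.le_max' z (mem_of_mem_erase hz)).lt_of_ne (ne_of_mem_erase hz)

theorem exists_prod_X_sub_C_eq_sub_derivative (S : Finset ℝ) :
    ∃ T : Finset ℝ, (∀ t ∈ T, ∃ z ∈ S, z < t) ∧
      ∏ z ∈ S, (X - C z) - derivative (∏ z ∈ S, (X - C z)) = ∏ t ∈ T, (X - C t) := by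
  rcases S.eq_empty_or_nonempty with rfl | hS
  · exact ⟨∅, by simp, by simp⟩
  set p := ∏ z ∈ S, (X - C z)
  have hp : p.Monic := monic_prod_of_monic _ _ fun z _ => monic_X_sub_C z
  have hpS : ∀ z ∈ S, p.IsRoot z := fun z hz => by
    simp [p, IsRoot, eval_prod, prod_eq_zero hz]
  have hdeg := degree_derivative_lt hp.ne_zero
  have hq : (p - derivative p).Monic := hp.sub_of_left hdeg
  have hqdeg : (p - derivative p).natDegree = #S := by
    rw [natDegree_eq_of_degree_eq (degree_sub_eq_left_of_degree_lt hdeg),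
      natDegree_finsetProd_X_sub_C_eq_card]
  set M := S.max' hS
  obtain ⟨c, hMc, hc⟩ : ∃ c, M < c ∧ (p - derivative p).IsRoot c := by
    refine exists_isRoot_gt_of_eval_neg ?_ (by rw [hq.leadingCoeff]; exact zero_le_one) ?_
    · exact natDegree_pos_iff_degree_pos.1 (hqdeg ▸ hS.card_pos)
    · rw [eval_sub, (hpS M (S.max'_mem hS)).eq_zero, zero_sub, neg_lt_zero]
      exact eval_derivative_prod_X_sub_C_max'_pos hS
  set T := (p - derivative p).roots.toFinset.filter (S.min' hS < ·)
  have hmemT {t : ℝ} (ht : (p - derivative p).IsRoot t) (hmt : S.min' hS < t) : t ∈ T :=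
    mem_filter.2 ⟨Multiset.mem_toFinset.2 ((mem_roots hq.ne_zero).2 ht), hmt⟩
  have hcT : c ∈ T := hmemT hc ((S.min'_le_max' hS).trans_lt hMc)
  -- Rolle gives a root of `p - p'` between any two roots of `p`, and `c` lies beyond all of them.
  have hcard : #S ≤ #T := calc
    #S ≤ #((T.erase c) \ S) + 1 := card_le_sdiff_of_interleaved fun x hx y hy hxy _ => by
      obtain ⟨z, hz, hzq⟩ := exists_isRoot_sub_derivative_between hxy (hpS x hx) (hpS y hy)
      refine ⟨z, mem_erase.2 ⟨?_, hmemT hzq ((S.min'_le x hx).trans_lt hz.1)⟩, hz⟩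
      exact (hz.2.trans ((S.le_max' y hy).trans_lt hMc)).ne
    _ ≤ #(T.erase c) + 1 := by grw [sdiff_subset]
    _ = #T := card_erase_add_one hcT
  refine ⟨T, fun t ht => ⟨S.min' hS, S.min'_mem hS, (mem_filter.1 ht).2⟩, ?_⟩
  exact hq.eq_prod_X_sub_C_of_natDegree_le_card
    (fun t ht => (mem_roots hq.ne_zero).1 (Multiset.mem_toFinset.1 (mem_filter.1 ht).1))
    (hqdeg.trans_le hcard)

end Polynomial

/-- `(-1)ⁿ Tₙ(-X)`, where `Tₙ = ∑ₖ S(n, k) Xᵏ` is the Touchard polynomial. -/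
noncomputable def signedTouchard (R : Type*) [CommRing R] : ℕ → R[X]
  | 0 => 1
  | n + 1 => X * (signedTouchard R n - derivative (signedTouchard R n))

section signedTouchard

variable {R : Type*} [CommRing R]

theorem coeff_signedTouchard (n k : ℕ) :
    (signedTouchard R n).coeff k = (-1) ^ (n + k) * Nat.stirlingSecond n k := by
  induction n generalizing k with
  | zero => cases k <;> simp [signedTouchard, coeff_one]
  | succ n ih =>
    cases k with
    | zero => simp [signedTouchard]
    | succ k =>
      rw [signedTouchard, coeff_X_mul, coeff_sub, coeff_derivative, ih, ih,
        Nat.stirlingSecond_succ_succ]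
      push_cast
      ring

theorem natDegree_signedTouchard [Nontrivial R] (n : ℕ) : (signedTouchard R n).natDegree = n := by
  refine natDegree_eq_of_le_of_coeff_ne_zero (natDegree_le_iff_coeff_eq_zero.2 fun k hk => ?_) ?_
  · rw [coeff_signedTouchard, Nat.stirlingSecond_eq_zero_of_lt hk, Nat.cast_zero, mul_zero]
  · rw [coeff_signedTouchard, Nat.stirlingSecond_self, (Even.add_self n).neg_one_pow]
    simp

theorem exists_signedTouchard_eq_prod (n : ℕ) :
    ∃ S : Finset ℝ, (∀ z ∈ S, 0 ≤ z) ∧ signedTouchard ℝ n = ∏ z ∈ S, (X - C z) := by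
  induction n with
  | zero => exact ⟨∅, by simp, rfl⟩
  | succ n ih =>
    obtain ⟨S, hS, hprod⟩ := ih
    obtain ⟨T, hT, hTprod⟩ := exists_prod_X_sub_C_eq_sub_derivative S
    have hTpos : ∀ t ∈ T, 0 < t := fun t ht => by
      obtain ⟨z, hz, hzt⟩ := hT t ht
      exact (hS z hz).trans_lt hzt
    refine ⟨insert 0 T, fun z hz => ?_, ?_⟩
    · rcases mem_insert.1 hz with rfl | hz
      exacts [le_rfl, (hTpos z hz).le]
    · rw [signedTouchard, hprod, hTprod, prod_insert fun h => (hTpos 0 h).false, C_0, sub_zero]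

end signedTouchard

/-- `PnNeg n` over an arbitrary ring. -/
noncomputable def stirlingSeries (R : Type*) [Ring R] (n : ℕ) : PowerSeries R :=
  PowerSeries.mk fun j => (-1 : R) ^ j * (stirling n (n - j) : R)

section stirlingSeries

variable {R : Type*}

theorem map_stirlingSeries [Ring R] {S : Type*} [Ring S] (f : R →+* S) (n : ℕ) :
    PowerSeries.map f (stirlingSeries R n) = stirlingSeries S n := by
  ext j
  simp [stirlingSeries]

theorem constantCoeff_stirlingSeries [Ring R] (n : ℕ) :
    PowerSeries.constantCoeff (stirlingSeries R n) = 1 := by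
  simp [stirlingSeries, stirling_eq_stirlingSecond, Nat.stirlingSecond_self]

theorem stirlingSeries_eq_reverse_signedTouchard [CommRing R] [Nontrivial R] {n : ℕ}
    (hn : 1 ≤ n) : stirlingSeries R n = ((signedTouchard R n).reverse : PowerSeries R) := by
  ext j
  rw [stirlingSeries, PowerSeries.coeff_mk, coeff_coe, coeff_reverse, natDegree_signedTouchard,
    stirling_eq_stirlingSecond]
  rcases le_or_gt j n with hj | hj
  · obtain ⟨i, rfl⟩ := Nat.exists_eq_add_of_le hj
    rw [revAt_le hj, coeff_signedTouchard, Nat.add_sub_cancel_left,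
      show j + i + i = j + 2 * i by ring, pow_add, pow_mul, neg_one_sq, one_pow, mul_one]
  · obtain ⟨m, rfl⟩ := Nat.exists_eq_add_of_le' hn
    rw [revAt_eq_self_of_lt hj, coeff_signedTouchard, Nat.sub_eq_zero_of_le hj.le,
      Nat.stirlingSecond_eq_zero_of_lt hj, Nat.stirlingSecond_succ_zero, Nat.cast_zero, mul_zero,
      mul_zero]

end stirlingSeries

namespace PowerSeries

theorem coeff_prod_nonneg {ι R : Type*} [CommSemiring R] [PartialOrder R] [IsOrderedRing R]
    {s : Finset ι} {f : ι → PowerSeries R} (hf : ∀ i ∈ s, ∀ n, 0 ≤ coeff n (f i)) (n : ℕ) :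
    0 ≤ coeff n (∏ i ∈ s, f i) := by
  induction s using Finset.cons_induction generalizing n with
  | empty =>
    rw [prod_empty, coeff_one]
    split_ifs
    exacts [zero_le_one, le_rfl]
  | cons i s hi ih =>
    rw [prod_cons, coeff_mul]
    exact sum_nonneg fun p _ => mul_nonneg (hf i (mem_cons_self i s) _)
      (ih (fun j hj => hf j (mem_cons_of_mem hj)) _)

theorem mk_pow_mul_one_sub_C_mul_X {R : Type*} [CommRing R] (a : R) :
    mk (a ^ ·) * (1 - C a * X) = 1 := by
  have := congrArg (rescale a) (mk_one_mul_one_sub_eq_one (S := R))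
  simpa only [map_mul, map_sub, map_one, rescale_mk, rescale_X, Pi.one_apply, mul_one] using this

theorem coeff_inv_prod_one_sub_C_mul_X_nonneg {K : Type*} [Field K] [PartialOrder K]
    [IsOrderedRing K] {S : Finset K} (hS : ∀ z ∈ S, 0 ≤ z) (n : ℕ) :
    0 ≤ coeff n (∏ z ∈ S, (1 - C z * X))⁻¹ := by
  have h0 : constantCoeff (∏ z ∈ S, (1 - C z * X)) ≠ 0 := by simp
  rw [(inv_eq_iff_mul_eq_one h0).2 (by
    rw [← prod_mul_distrib]
    exact prod_eq_one fun z _ => mk_pow_mul_one_sub_C_mul_X z)]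
  exact coeff_prod_nonneg (fun z hz m => by simpa using pow_nonneg (hS z hz) m) n

theorem inv_map_eq_map_invOfUnit {R K : Type*} [CommRing R] [Field K] (f : R →+* K)
    (φ : PowerSeries R) (u : Rˣ) (h : constantCoeff φ = u) :
    (map f φ)⁻¹ = map f (φ.invOfUnit u) :=
  (inv_eq_iff_mul_eq_one (by
    rw [← coeff_zero_eq_constantCoeff_apply, coeff_map, coeff_zero_eq_constantCoeff_apply, h]
    exact (u.isUnit.map f).ne_zero)).2 (by
    rw [← map_mul, invOfUnit_mul φ u h, map_one])

end PowerSeries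

theorem coeff_inv_stirlingSeries_real_nonneg {n : ℕ} (hn : 1 ≤ n) (N : ℕ) :
    0 ≤ PowerSeries.coeff N (stirlingSeries ℝ n)⁻¹ := by
  obtain ⟨S, hS, hprod⟩ := exists_signedTouchard_eq_prod n
  rw [stirlingSeries_eq_reverse_signedTouchard hn, hprod, reverse_prod_X_sub_C,
    ← coeToPowerSeries.ringHom_apply, map_prod]
  simp only [map_sub, map_one, map_mul, coeToPowerSeries.ringHom_apply, coe_C, coe_X]
  exact PowerSeries.coeff_inv_prod_one_sub_C_mul_X_nonneg hS N

/-- every coefficient of the inverse power series `1/P_n(-t)` is a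
nonnegative integer. -/
theorem stmt_19 (n : ℕ) (hn : 1 ≤ n) (N : ℕ) :
    ∃ m : ℕ, PowerSeries.coeff (R := ℚ) N (PnNeg n)⁻¹ = (m : ℚ) := by
  set G := (stirlingSeries ℤ n).invOfUnit 1
  have hG (K : Type) [Field K] :
      (stirlingSeries K n)⁻¹ = PowerSeries.map (Int.castRingHom K) G := by
    rw [← map_stirlingSeries (Int.castRingHom K), PowerSeries.inv_map_eq_map_invOfUnit _ _ _
      (by rw [constantCoeff_stirlingSeries, Units.val_one])]
  have hG_nonneg : 0 ≤ PowerSeries.coeff N G := by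
    have := coeff_inv_stirlingSeries_real_nonneg hn N
    rw [hG, PowerSeries.coeff_map, eq_intCast] at this
    exact_mod_cast this
  refine ⟨(PowerSeries.coeff N G).toNat, ?_⟩
  rw [show PnNeg n = stirlingSeries ℚ n from rfl, hG, PowerSeries.coeff_map, eq_intCast]
  exact_mod_cast (Int.toNat_of_nonneg hG_nonneg).symm
end
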